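/- Let D ∈ ℝ^{r×r} and Δt/ε > 0 such that I - (Δt/ε)Dᵀ is invertible. If K^{n+1} = K^n (I - (Δt/ε)Dᵀ)^{-1} (backward Euler for the K flow ∂_t K = (1/ε)KDᵀ) and S² = S¹(I - (Δt/ε)Dᵀ) (forward Euler for the backwards S flow ∂_t S = -(1/ε)SDᵀ), with K^{n+1} = X^{n+1}S¹, then g² := X^{n+1} S² (Vⁿ)ᵀ = Kⁿ (Vⁿ)ᵀ = gⁿ; i.e., the composed discrete K and S steps exactly cancel. -/

import Mathlib

open Matrix

theorem Matrix.mul_mul_eq_of_mul_eq_mul_inv {m n R : Type*} [Fintype n] [DecidableEq n]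
    [CommRing R] {K X : Matrix m n R} {S A : Matrix n n R} (hA : IsUnit A.det)
    (h : X * S = K * A⁻¹) : X * (S * A) = K := by
  rw [← Matrix.mul_assoc, h, Matrix.mul_assoc, nonsing_inv_mul _ hA, Matrix.mul_one]

theorem KS_steps_cancel_general {Nx Nv r : ℕ} (Δt ε : ℝ)
    (D : Matrix (Fin r) (Fin r) ℝ)
    (Kn Kn1 X1 : Matrix (Fin Nx) (Fin r) ℝ)
    (S1 S2 : Matrix (Fin r) (Fin r) ℝ)
    (Vn : Matrix (Fin Nv) (Fin r) ℝ)
    (hinv : IsUnit (1 - (Δt / ε) • Dᵀ).det)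
    (hK : Kn1 = Kn * (1 - (Δt / ε) • Dᵀ)⁻¹)
    (hS : S2 = S1 * (1 - (Δt / ε) • Dᵀ))
    (hfact : Kn1 = X1 * S1) :
    X1 * S2 * Vnᵀ = Kn * Vnᵀ := by
  rw [hS, mul_mul_eq_of_mul_eq_mul_inv hinv (hfact.symm.trans hK)]

/-- Backward Euler for the `K` flow `∂_t K = (1/ε)KDᵀ` followed by
forward Euler for the backwards `S` flow `∂_t S = -(1/ε)SDᵀ` exactly cancel:
`g² = X^{n+1} S² (Vⁿ)ᵀ = Kⁿ (Vⁿ)ᵀ = gⁿ`. -/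
theorem KS_steps_cancel {Nx Nv r : ℕ} (Δt ε : ℝ) (hΔt : 0 < Δt) (hε : 0 < ε)
    (D : Matrix (Fin r) (Fin r) ℝ)
    (Kn Kn1 X1 : Matrix (Fin Nx) (Fin r) ℝ)
    (S1 S2 : Matrix (Fin r) (Fin r) ℝ)
    (Vn : Matrix (Fin Nv) (Fin r) ℝ)
    (hinv : IsUnit (1 - (Δt / ε) • Dᵀ).det)
    (hK : Kn1 = Kn * (1 - (Δt / ε) • Dᵀ)⁻¹)
    (hS : S2 = S1 * (1 - (Δt / ε) • Dᵀ))
    (hfact : Kn1 = X1 * S1) :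
    X1 * S2 * Vnᵀ = Kn * Vnᵀ :=
  KS_steps_cancel_general Δt ε D Kn Kn1 X1 S1 S2 Vn hinv hK hS hfact
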